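/- arXiv:1208.2921 — 3 statements merged into one kernel-verified Lean document; each statement's English description precedes it below -/
import Mathlib

section
/- If a selection function s on a set W is metric — i.e., there is a metric d on W such that for every w and every nonempty A ⊆ W, s(w,A) is the unique d-closest member of A to w — then s is transitive: for nonempty A, B ⊆ W, any C ⊆ W, and any w, s(w, A∪B) ∈ A and s(w, B∪C) ∈ B imply s(w, A∪C) = s(w, A∪B). -/
/-- A metric selection function is transitive. -/
theorem metric_selection_is_transitive (W : Type*) (s : W → Set W → W)
    (d : W → W → ℝ)
    (hd0 : ∀ x y, d x y = 0 ↔ x = y)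
    (hdsymm : ∀ x y, d x y = d y x)
    (hdtri : ∀ x y z, d x z ≤ d x y + d y z)
    (hmetric : ∀ w (A : Set W), A.Nonempty →
      s w A ∈ A ∧ ∀ x ∈ A, x ≠ s w A → d w (s w A) < d w x) :
    ∀ (A B C : Set W) (w : W), A.Nonempty → B.Nonempty →
      s w (A ∪ B) ∈ A → s w (B ∪ C) ∈ B → s w (A ∪ C) = s w (A ∪ B) := by
  intro A B C w hA hB ha hb
  obtain ⟨a0, ha0⟩ := hA
  have hABne : (A ∪ B).Nonempty := ⟨a0, Or.inl ha0⟩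
  have hBCne : (B ∪ C).Nonempty := hB.mono Set.subset_union_left
  have hACne : (A ∪ C).Nonempty := ⟨a0, Or.inl ha0⟩
  obtain ⟨hmemAB, hminAB⟩ := hmetric w (A ∪ B) hABne
  obtain ⟨hmemBC, hminBC⟩ := hmetric w (B ∪ C) hBCne
  obtain ⟨hmemAC, hminAC⟩ := hmetric w (A ∪ C) hACne
  set a := s w (A ∪ B)
  set b := s w (B ∪ C)
  set c := s w (A ∪ C)
  by_contra hne
  -- d w c < d w a since a ∈ A ∪ C and c is strict minimizer
  have h1 : d w c < d w a := hminAC a (Or.inl ha) (Ne.symm hne)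
  -- d w a ≤ d w b
  have h2 : d w a ≤ d w b := by
    rcases eq_or_ne b a with h | h
    · rw [h]
    · exact le_of_lt (hminAB b (Or.inr hb) h)
  -- c ∈ A ∪ C; case on membership
  rcases hmemAC with hcA | hcC
  · -- c ∈ A, so c ∈ A ∪ B, and c ≠ a gives d w a < d w c, contradiction
    exact absurd (hminAB c (Or.inl hcA) hne) (not_lt.mpr h1.le)
  · -- c ∈ C ⊆ B ∪ C, so d w b ≤ d w c
    have h3 : d w b ≤ d w c := by
      rcases eq_or_ne c b with h | h
      · rw [h]
      · exact le_of_lt (hminBC c (Or.inr hcC) h)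
    linarith
end

section
/- If a selection function s on a set W is metric (s(w,A) is the unique d-nearest point of A to w, for some metric d on W), then W is countable. -/
/-- A subset of ℝ in which every nonempty subset has a least element is countable. -/
lemma countable_of_min (S : Set ℝ)
    (hmin : ∀ T ⊆ S, T.Nonempty → ∃ m ∈ T, ∀ t ∈ T, m ≤ t) :
    S.Countable := by
  classical
  set S' : Set ℝ := {r ∈ S | (S ∩ Set.Ioi r).Nonempty} with hS'
  have hex : ∀ r ∈ S', ∃ m ∈ S ∩ Set.Ioi r, ∀ t ∈ S ∩ Set.Ioi r, m ≤ t := by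
    intro r hr
    exact hmin _ Set.inter_subset_left hr.2
  choose! y hy hy' using hex
  have hlt : ∀ r ∈ S', r < y r := fun r hr => (hy r hr).2
  have hdisj : S'.PairwiseDisjoint fun r => Set.Ioo r (y r) := by
    intro a ha b hb hab
    rcases lt_or_gt_of_ne hab with h | h
    · have hyb : y a ≤ b := hy' a ha b ⟨hb.1, h⟩
      refine Set.disjoint_left.2 fun u hu hu' => ?_
      exact absurd (hu.2.trans_le hyb) (not_lt.2 hu'.1.le)
    · have hya : y b ≤ a := hy' b hb a ⟨ha.1, h⟩
      refine Set.disjoint_left.2 fun u hu hu' => ?_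
      exact absurd (hu'.2.trans_le hya) (not_lt.2 hu.1.le)
  have hS'c : S'.Countable := hdisj.countable_of_Ioo hlt
  have hsub : (S \ S').Subsingleton := by
    intro a ha b hb
    by_contra hab
    rcases lt_or_gt_of_ne hab with h | h
    · exact ha.2 ⟨ha.1, b, hb.1, h⟩
    · exact hb.2 ⟨hb.1, a, ha.1, h⟩
  have : S ⊆ S' ∪ (S \ S') := fun x hx => by
    by_cases h : x ∈ S'
    · exact Or.inl h
    · exact Or.inr ⟨hx, h⟩
  exact (hS'c.union hsub.countable).mono this

/-- If a selection function on W is metric, then W is countable. -/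
theorem countable_of_metric_selection (W : Type*) (s : W → Set W → W)
    (d : W → W → ℝ)
    (hd0 : ∀ x y, d x y = 0 ↔ x = y)
    (hdsymm : ∀ x y, d x y = d y x)
    (hdtri : ∀ x y z, d x z ≤ d x y + d y z)
    (hmetric : ∀ w (A : Set W), A.Nonempty →
      s w A ∈ A ∧ ∀ x ∈ A, x ≠ s w A → d w (s w A) < d w x) :
    Countable W := by
  classical
  rcases isEmpty_or_nonempty W with hW | hW
  · infer_instance
  obtain ⟨w₀⟩ := hW
  -- the distance function from w₀ is injective
  have hinj : Function.Injective (d w₀) := by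
    intro x z hxz
    by_contra hne
    obtain ⟨hmem, hlt⟩ := hmetric w₀ {x, z} ⟨x, Or.inl rfl⟩
    rcases hmem with h1 | h1
    · have := hlt z (Or.inr rfl) (by rw [h1]; exact Ne.symm hne)
      rw [h1, hxz] at this; exact lt_irrefl _ this
    · have := hlt x (Or.inl rfl) (by rw [h1]; exact hne)
      rw [h1, hxz] at this; exact lt_irrefl _ this
  set S : Set ℝ := Set.range (d w₀) with hS
  have hmin : ∀ T ⊆ S, T.Nonempty → ∃ m ∈ T, ∀ t ∈ T, m ≤ t := by
    intro T hTS ⟨t0, ht0⟩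
    set A : Set W := {x | d w₀ x ∈ T} with hA
    obtain ⟨x0, hx0⟩ := hTS ht0
    have hAne : A.Nonempty := ⟨x0, by simp [hA, hx0, ht0]⟩
    obtain ⟨hsmem, hslt⟩ := hmetric w₀ A hAne
    refine ⟨d w₀ (s w₀ A), hsmem, fun t ht => ?_⟩
    obtain ⟨x, hx⟩ := hTS ht
    have hxA : x ∈ A := by simp [hA, hx, ht]
    by_cases hxs : x = s w₀ A
    · rw [← hx, hxs]
    · rw [← hx]; exact (hslt x hxA hxs).le
  have hSc : S.Countable := countable_of_min S hmin
  have : Countable S := hSc.to_subtype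
  exact Countable.of_equiv _ (Equiv.ofInjective (d w₀) hinj).symm
end

section
/- Suppose G : D × D → (nonempty subsets of W), w₀ ∈ W, u : W → ℝ, and s is a selection function. Assume for all a₁,b₁,a₂,b₂ ∈ D: u(s(w₀,G(a₁,b₁))) < u(s(w₀,G(a₂,b₂))) if and only if u(s(w₀,G(a₁,a₁))) < u(s(w₀,G(a₂,a₂))), or (a₁ = a₂ and u(s(w₀,G(b₁,b₁))) < u(s(w₀,G(b₂,b₂)))). Assume also a ↦ u(s(w₀,G(a,a))) is injective. Then D is countable. -/
/-- If the utilities of selected worlds realize a lexicographic order on D × D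
inside ℝ, then D is countable. -/
theorem countable_of_lex_realization (W : Type*) (D : Type*) (w₀ : W)
    (u : W → ℝ) (s : W → Set W → W)
    (hsel : ∀ w (A : Set W), A.Nonempty → s w A ∈ A)
    (G : D → D → Set W) (hG : ∀ a b, (G a b).Nonempty)
    (hlex : ∀ a₁ b₁ a₂ b₂ : D,
      u (s w₀ (G a₁ b₁)) < u (s w₀ (G a₂ b₂)) ↔
        (u (s w₀ (G a₁ a₁)) < u (s w₀ (G a₂ a₂)) ∨
          (a₁ = a₂ ∧ u (s w₀ (G b₁ b₁)) < u (s w₀ (G b₂ b₂)))))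
    (hinj : Function.Injective fun a => u (s w₀ (G a a))) :
    Countable D := by
  classical
  by_cases hsub : Subsingleton D
  · exact Subsingleton.to_countable
  · rw [not_subsingleton_iff_nontrivial] at hsub
    obtain ⟨c₁, c₂, hc⟩ := hsub
    set f : D → D → ℝ := fun a b => u (s w₀ (G a b)) with hf
    set v : D → ℝ := fun a => f a a with hv
    have hvne : v c₁ ≠ v c₂ := fun h => hc (hinj h)
    -- choose b₁ b₂ with v b₁ < v b₂
    obtain ⟨b₁, b₂, hb⟩ : ∃ b₁ b₂ : D, v b₁ < v b₂ := by
      rcases lt_or_gt_of_ne hvne with h | h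
      · exact ⟨c₁, c₂, h⟩
      · exact ⟨c₂, c₁, h⟩
    have hne : ∀ a : D, f a b₁ < f a b₂ := fun a =>
      (hlex a b₁ a b₂).mpr (Or.inr ⟨rfl, hb⟩)
    have hsep : ∀ a a' : D, v a < v a' → f a b₂ < f a' b₁ := fun a a' h =>
      (hlex a b₂ a' b₁).mpr (Or.inl h)
    choose q hq1 hq2 using fun a : D => exists_rat_btwn (hne a)
    refine (Function.Injective.countable (f := q) ?_)
    intro a a' hqq
    by_contra hne'
    have hvv : v a ≠ v a' := fun h => hne' (hinj h)
    rcases lt_or_gt_of_ne hvv with h | h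
    · have := (hq2 a).trans ((hsep a a' h).trans (hq1 a'))
      rw [hqq] at this
      exact lt_irrefl _ this
    · have := (hq2 a').trans ((hsep a' a h).trans (hq1 a))
      rw [hqq] at this
      exact lt_irrefl _ this
end
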